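/- arXiv:1812.01453 — 5 statements merged into one kernel-verified Lean document; each statement's English description precedes it below -/
import Mathlib

section
/- Let X and A be complex numbers such that A is not an odd multiple of π/2 (equivalently, cos A ≠ 0). Then cos(X+A)/cos(A) = ∏_{k=1}^∞ (1 − X/((k−1/2)π − A))·(1 + X/((k−1/2)π + A)), where the infinite product converges. -/
/-!
With `c_k = (k - 1/2)π`, each factor of the product equals
`(1 - (X + A)² / c_k²) / (1 - A² / c_k²)`, so the product is the quotient of the cosine products
`cos z = ∏ (1 - z² / c_k²)` at `z = X + A` and at `z = A`. The cosine product is read off from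
Euler's sine product at `w + 1/2`, where `z = π w`: the factors `(j - 1/2 - w)(j + 1/2 + w) / j²`
of that product telescope against those of the cosine product, and what remains is
`(n + 1/2 + w) / (n + 1/2) → 1` times the sine product at `1/2`, whose limit is `sin (π/2) = 1`.
Unlike `cos z = sin 2z / (2 sin z)`, this never divides by a quantity that may vanish.
-/

open Filter Finset Topology Real

namespace Complex

theorem natCast_add_half_ne_zero (n : ℕ) : (n : ℂ) + 1 / 2 ≠ 0 := by
  have h : (2 * n + 1 : ℂ) ≠ 0 := by norm_cast
  contrapose! h
  linear_combination 2 * h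

theorem cos_natCast_add_half_mul_pi (k : ℕ) : cos (((k : ℂ) + 1 / 2) * π) = 0 :=
  cos_eq_zero_iff.mpr ⟨k, by push_cast; ring⟩

theorem euler_sin_prod_add_half_eq_mul_cos_prod (w : ℂ) (n : ℕ) :
    (w + 1 / 2) * (∏ j ∈ range n, (1 - (w + 1 / 2) ^ 2 / ((j : ℂ) + 1) ^ 2)) * ((n : ℂ) + 1 / 2) =
      (1 / 2 * ∏ j ∈ range n, (1 - (1 / 2) ^ 2 / ((j : ℂ) + 1) ^ 2)) * ((n : ℂ) + 1 / 2 + w) *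
        ∏ j ∈ range n, (1 - w ^ 2 / ((j : ℂ) + 1 / 2) ^ 2) := by
  induction n with
  | zero => simp only [prod_range_zero, Nat.cast_zero]; ring
  | succ n ih =>
    simp only [prod_range_succ]
    generalize ∏ j ∈ range n, (1 - (w + 1 / 2) ^ 2 / ((j : ℂ) + 1) ^ 2) = P at ih ⊢
    generalize ∏ j ∈ range n, (1 - (1 / 2) ^ 2 / ((j : ℂ) + 1) ^ 2) = R at ih ⊢
    generalize ∏ j ∈ range n, (1 - w ^ 2 / ((j : ℂ) + 1 / 2) ^ 2) = Q at ih ⊢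
    have hn : 2 * (n : ℂ) + 1 ≠ 0 := by norm_cast
    push_cast
    field_simp
    linear_combination 4 * (2 * (n : ℂ) + 1 - 2 * w) * (2 * (n : ℂ) + 3 + 2 * w) *
      (2 * (n : ℂ) + 3) * (2 * (n : ℂ) + 1) * ih

theorem tendsto_natCast_add_half_add_div (w : ℂ) :
    Tendsto (fun n : ℕ => ((n : ℂ) + 1 / 2 + w) / ((n : ℂ) + 1 / 2)) atTop (𝓝 1) := by
  have h : Tendsto (fun n : ℕ => ((n : ℂ) + 1 / 2)⁻¹) atTop (𝓝 0) :=
    tendsto_inv₀_cobounded.comp <|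
      (tendsto_add_const_cobounded _).comp tendsto_natCast_atTop_cobounded
  have hlim := (h.const_mul w).const_add 1
  rw [mul_zero, add_zero] at hlim
  refine hlim.congr fun n => ?_
  rw [add_div, div_self (natCast_add_half_ne_zero n), ← div_eq_mul_inv]

theorem tendsto_euler_cos_prod (w : ℂ) :
    Tendsto (fun n : ℕ => ∏ j ∈ range n, (1 - w ^ 2 / ((j : ℂ) + 1 / 2) ^ 2))
      atTop (𝓝 (cos (π * w))) := by
  have hshift := tendsto_euler_sin_prod (w + 1 / 2)
  rw [mul_add, show (π : ℂ) * (1 / 2) = π / 2 by ring, sin_add_pi_div_two] at hshift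
  have hhalf := tendsto_euler_sin_prod (1 / 2)
  rw [show (π : ℂ) * (1 / 2) = π / 2 by ring, sin_pi_div_two] at hhalf
  rw [← tendsto_mul_iff_of_ne_zero ((tendsto_natCast_add_half_add_div w).mul hhalf) (by norm_num),
    mul_one, mul_one]
  refine hshift.congr fun n => ?_
  rw [div_mul_eq_mul_div, mul_div_assoc', eq_div_iff (natCast_add_half_ne_zero n)]
  linear_combination (π : ℂ) * euler_sin_prod_add_half_eq_mul_cos_prod w n

theorem tendsto_euler_cos_prod' (z : ℂ) :
    Tendsto (fun n : ℕ => ∏ k ∈ range n, (1 - z ^ 2 / (((k : ℂ) + 1 / 2) * π) ^ 2))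
      atTop (𝓝 (cos z)) := by
  have hπ : (π : ℂ) ≠ 0 := ofReal_ne_zero.mpr pi_ne_zero
  simpa [mul_div_cancel₀ z hπ, div_pow, mul_pow, div_div, mul_comm]
    using tendsto_euler_cos_prod (z / π)

end Complex

theorem one_sub_div_sub_mul_one_add_div_add {K : Type*} [Field K] {c a : K} (x : K)
    (hc : c ≠ 0) (hsub : c - a ≠ 0) (hadd : c + a ≠ 0) :
    (1 - x / (c - a)) * (1 + x / (c + a)) = (1 - (x + a) ^ 2 / c ^ 2) / (1 - a ^ 2 / c ^ 2) := by
  have hden : 1 - a ^ 2 / c ^ 2 = (c - a) * (c + a) / c ^ 2 := by field_simp; ring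
  rw [hden]
  field_simp
  ring

/-- The index `k : ℕ` of the product corresponds to `k + 1` in `c_k = (k - 1/2)π`. -/
theorem euler_ramanujan_product (X A : ℂ) (hA : Complex.cos A ≠ 0) :
    Filter.Tendsto
      (fun K : ℕ => ∏ k ∈ Finset.range K,
        ((1 - X / (((k : ℂ) + 1 / 2) * Real.pi - A)) *
          (1 + X / (((k : ℂ) + 1 / 2) * Real.pi + A))))
      Filter.atTop (nhds (Complex.cos (X + A) / Complex.cos A)) := by
  have hc (k : ℕ) : ((k : ℂ) + 1 / 2) * π ≠ 0 :=
    mul_ne_zero (Complex.natCast_add_half_ne_zero k) (Complex.ofReal_ne_zero.mpr pi_ne_zero)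
  have hsub (k : ℕ) : ((k : ℂ) + 1 / 2) * π - A ≠ 0 := fun h =>
    hA (by rw [← sub_eq_zero.mp h]; exact Complex.cos_natCast_add_half_mul_pi k)
  have hadd (k : ℕ) : ((k : ℂ) + 1 / 2) * π + A ≠ 0 := fun h =>
    hA (by rw [eq_neg_of_add_eq_zero_right h, Complex.cos_neg]
           exact Complex.cos_natCast_add_half_mul_pi k)
  refine ((Complex.tendsto_euler_cos_prod' (X + A)).div
    (Complex.tendsto_euler_cos_prod' A) hA).congr fun K => ?_
  rw [Pi.div_apply, ← prod_div_distrib]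
  exact prod_congr rfl fun k _ =>
    (one_sub_div_sub_mul_one_add_div_add X (hc k) (hsub k) (hadd k)).symm
end

section
/- Let x and y be real numbers with −π/2 < x < π/2 and −π/2 < y < π/2. Then log(cos(y)/cos(x)) = ∑_{k=1}^∞ log( ((c_k − y)(c_k + y)) / ((c_k − x)(c_k + x)) ), where the series on the right converges. -/
/-!
Euler's sine product at `2t/π` splits into its factors of even and of odd index; the odd ones
form the sine product at `t/π`, so by `sin 2t = 2 sin t cos t` the even ones converge to
`cos t = ∏ (1 - t² / c_k²)`. For `|t| < π/2` every factor is positive and `1 - t²/c_k²` is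
`1 + O(k⁻²)`, so the logarithms sum to `log (cos t)`. Since `(c_k - t)(c_k + t) = c_k² (1 - t²/c_k²)`,
the series of the theorem is the difference of these series for `y` and for `x`.
-/

open Real Filter Finset Topology

theorem Finset.prod_range_two_mul {M : Type*} [CommMonoid M] (f : ℕ → M) (n : ℕ) :
    ∏ j ∈ range (2 * n), f j = (∏ i ∈ range n, f (2 * i)) * ∏ i ∈ range n, f (2 * i + 1) := by
  induction n with
  | zero => simp
  | succ n ih =>
    rw [mul_add_one, prod_range_succ, prod_range_succ, ih, prod_range_succ, prod_range_succ]
    ac_rfl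

theorem Real.tendsto_euler_cos_prod {t : ℝ} (ht : sin t ≠ 0) :
    Tendsto (fun n : ℕ => ∏ k ∈ range n, (1 - t ^ 2 / (((k : ℝ) + 1 / 2) * π) ^ 2))
      atTop (𝓝 (cos t)) := by
  set w := t / π
  have htw : π * w = t := mul_div_cancel₀ t pi_ne_zero
  have hsin : Tendsto (fun n : ℕ => 2 * (π * w * ∏ i ∈ range n, (1 - w ^ 2 / ((i : ℝ) + 1) ^ 2)))
      atTop (𝓝 (2 * sin t)) := by
    simpa only [htw] using (tendsto_euler_sin_prod w).const_mul 2
  have hsin₂ : Tendsto (fun n : ℕ => 2 * t *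
      ∏ j ∈ range (2 * n), (1 - (2 * w) ^ 2 / ((j : ℝ) + 1) ^ 2)) atTop (𝓝 (sin (2 * t))) := by
    have h := (tendsto_euler_sin_prod (2 * w)).comp
      (strictMono_mul_left_of_pos two_pos).tendsto_atTop
    rw [mul_left_comm, htw] at h
    exact h
  have hsplit : ∀ n : ℕ, 2 * t *
      ∏ j ∈ range (2 * n), (1 - (2 * w) ^ 2 / ((j : ℝ) + 1) ^ 2) =
      (∏ k ∈ range n, (1 - t ^ 2 / (((k : ℝ) + 1 / 2) * π) ^ 2)) *
        (2 * (π * w * ∏ i ∈ range n, (1 - w ^ 2 / ((i : ℝ) + 1) ^ 2))) := by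
    intro n
    have heven : ∀ i : ℕ, 1 - (2 * w) ^ 2 / (((2 * i : ℕ) : ℝ) + 1) ^ 2 =
        1 - t ^ 2 / (((i : ℝ) + 1 / 2) * π) ^ 2 := by
      intro i
      rw [← htw]
      push_cast
      field_simp
    have hodd : ∀ i : ℕ, 1 - (2 * w) ^ 2 / (((2 * i + 1 : ℕ) : ℝ) + 1) ^ 2 =
        1 - w ^ 2 / ((i : ℝ) + 1) ^ 2 := by
      intro i
      push_cast
      field_simp
      ring
    rw [prod_range_two_mul, prod_congr rfl fun i _ => heven i, prod_congr rfl fun i _ => hodd i,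
      ← htw]
    ring
  have hlim : sin (2 * t) / (2 * sin t) = cos t := by
    rw [sin_two_mul]
    field_simp
  rw [← hlim]
  refine ((hsin₂.div hsin (mul_ne_zero two_ne_zero ht)).congr' ?_)
  filter_upwards [hsin.eventually_ne (mul_ne_zero two_ne_zero ht)] with n hn
  rw [Pi.div_apply, hsplit, mul_div_cancel_right₀ _ hn]

theorem Real.summable_one_div_nat_add_half_mul_pi_sq :
    Summable fun k : ℕ => 1 / (((k : ℝ) + 1 / 2) * π) ^ 2 := by
  have h := (summable_one_div_nat_add_rpow (1 / 2) 2).mpr one_lt_two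
  simp only [rpow_two, sq_abs] at h
  refine (h.mul_right (1 / π ^ 2)).congr fun k => ?_
  rw [mul_pow, one_div_mul_one_div]

theorem one_sub_sq_div_sq_pos {t c : ℝ} (h : |t| < c) : 0 < 1 - t ^ 2 / c ^ 2 := by
  have hc : 0 < c := (abs_nonneg t).trans_lt h
  rw [sub_pos, div_lt_one (by positivity)]
  exact sq_lt_sq' (abs_lt.mp h).1 (abs_lt.mp h).2

theorem abs_lt_nat_add_half_mul_pi {t : ℝ} (ht : t ∈ Set.Ioo (-(π / 2)) (π / 2)) (k : ℕ) :
    |t| < ((k : ℝ) + 1 / 2) * π := by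
  have : π / 2 ≤ ((k : ℝ) + 1 / 2) * π := by nlinarith [pi_pos, (k.cast_nonneg : (0 : ℝ) ≤ k)]
  exact (abs_lt.mpr ht).trans_le this

theorem Real.hasSum_log_cos {t : ℝ} (ht : t ∈ Set.Ioo (-(π / 2)) (π / 2)) :
    HasSum (fun k : ℕ => log (1 - t ^ 2 / (((k : ℝ) + 1 / 2) * π) ^ 2)) (log (cos t)) := by
  rcases eq_or_ne t 0 with rfl | ht₀
  · simp [hasSum_zero]
  have hpos k := one_sub_sq_div_sq_pos (abs_lt_nat_add_half_mul_pi ht k)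
  have hsum : Summable fun k : ℕ => log (1 - t ^ 2 / (((k : ℝ) + 1 / 2) * π) ^ 2) := by
    simp only [sub_eq_add_neg]
    refine summable_log_one_add_of_summable ?_
    simpa only [mul_one_div, neg_div] using
      (summable_one_div_nat_add_half_mul_pi_sq.mul_left (t ^ 2)).neg
  have hsin : sin t ≠ 0 := (sin_eq_zero_iff_of_lt_of_lt (by linarith [ht.1, pi_pos])
    (by linarith [ht.2, pi_pos])).not.mpr ht₀
  have hexp : exp (∑' k : ℕ, log (1 - t ^ 2 / (((k : ℝ) + 1 / 2) * π) ^ 2)) = cos t :=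
    tendsto_nhds_unique (hasProd_of_hasSum_log hpos hsum.hasSum).tendsto_prod_nat
      (tendsto_euler_cos_prod hsin)
  rw [← hexp, log_exp]
  exact hsum.hasSum

theorem sub_mul_add_eq_sq_mul_one_sub_sq_div {c : ℝ} (hc : c ≠ 0) (t : ℝ) :
    (c - t) * (c + t) = c ^ 2 * (1 - t ^ 2 / c ^ 2) := by
  field_simp
  ring

/-- The index `k : ℕ` corresponds to the index `k + 1` of the informal statement. -/
theorem log_euler_ramanujan (x y : ℝ)
    (hx₁ : -(Real.pi / 2) < x) (hx₂ : x < Real.pi / 2)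
    (hy₁ : -(Real.pi / 2) < y) (hy₂ : y < Real.pi / 2) :
    HasSum
      (fun k : ℕ => Real.log
        (((((k : ℝ) + 1 / 2) * Real.pi - y) * (((k : ℝ) + 1 / 2) * Real.pi + y)) /
          ((((k : ℝ) + 1 / 2) * Real.pi - x) * (((k : ℝ) + 1 / 2) * Real.pi + x))))
      (Real.log (Real.cos y / Real.cos x)) := by
  have hx : x ∈ Set.Ioo (-(π / 2)) (π / 2) := ⟨hx₁, hx₂⟩
  have hy : y ∈ Set.Ioo (-(π / 2)) (π / 2) := ⟨hy₁, hy₂⟩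
  rw [log_div (cos_pos_of_mem_Ioo hy).ne' (cos_pos_of_mem_Ioo hx).ne']
  refine ((hasSum_log_cos hy).sub (hasSum_log_cos hx)).congr_fun fun k => ?_
  have hc : ((k : ℝ) + 1 / 2) * π ≠ 0 := by positivity
  rw [sub_mul_add_eq_sq_mul_one_sub_sq_div hc, sub_mul_add_eq_sq_mul_one_sub_sq_div hc,
    mul_div_mul_left _ _ (pow_ne_zero 2 hc),
    log_div (one_sub_sq_div_sq_pos (abs_lt_nat_add_half_mul_pi hy k)).ne'
      (one_sub_sq_div_sq_pos (abs_lt_nat_add_half_mul_pi hx k)).ne']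
end

section
/- Let ζ be a complex number with |ζ| < 1/2, and set x = 2·Re(arctan ζ) and y = −Im(log((1 + ζ)/(1 − ζ))), where arctan ζ = (i/2)(log(1 − iζ) − log(1 + iζ)) and log is the principal branch. Then Re(log((1 + ζ²)/(1 − ζ²))) = log(cos(y)/cos(x)). -/
/-! Both `x` and `-y` are differences of arguments `arg (1 + a) - arg (1 - a)`, with `a = iζ` and
`a = ζ` respectively, and the cosine of such a difference is
`Re ((1 + a) * conj (1 - a)) / (‖1 + a‖ * ‖1 - a‖) = (1 - ‖a‖²) / ‖1 - a²‖`.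
Since `‖iζ‖ = ‖ζ‖` and `1 - (iζ)² = 1 + ζ²`, the factor `1 - ‖ζ‖²` cancels in `cos y / cos x`,
leaving `‖1 + ζ²‖ / ‖1 - ζ²‖`, whose logarithm is the left-hand side. -/

open Complex ComplexConjugate

lemma one_add_ne_zero_of_norm_lt_one {E : Type*} [NormedRing E] [NormOneClass E] {a : E}
    (ha : ‖a‖ < 1) : 1 + a ≠ 0 := by
  intro h
  rw [eq_neg_of_add_eq_zero_right h, norm_neg, norm_one] at ha
  exact lt_irrefl _ ha

lemma one_sub_ne_zero_of_norm_lt_one {E : Type*} [NormedRing E] [NormOneClass E] {a : E}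
    (ha : ‖a‖ < 1) : 1 - a ≠ 0 := by
  rw [sub_eq_add_neg]
  exact one_add_ne_zero_of_norm_lt_one (by rwa [norm_neg])

namespace Complex

lemma cos_arg_sub_arg {z w : ℂ} (hz : z ≠ 0) (hw : w ≠ 0) :
    Real.cos (arg z - arg w) = (z * conj w).re / (‖z‖ * ‖w‖) := by
  rw [Real.cos_sub, cos_arg hz, cos_arg hw, sin_arg, sin_arg]
  simp only [mul_re, conj_re, conj_im]
  field_simp
  ring

lemma cos_arg_div {z w : ℂ} (hz : z ≠ 0) (hw : w ≠ 0) :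
    Real.cos (arg (z / w)) = Real.cos (arg z - arg w) := by
  rw [← Real.Angle.cos_coe, arg_div_coe_angle hz hw, ← Real.Angle.coe_sub, Real.Angle.cos_coe]

lemma re_one_add_mul_conj_one_sub (a : ℂ) : ((1 + a) * conj (1 - a)).re = 1 - ‖a‖ ^ 2 := by
  rw [← normSq_eq_norm_sq, normSq_apply]
  simp only [mul_re, add_re, add_im, map_sub, map_one, sub_re, sub_im, one_re, one_im, conj_re,
    conj_im]
  ring

lemma cos_arg_one_add_sub_arg_one_sub {a : ℂ} (ha : ‖a‖ < 1) :
    Real.cos (arg (1 + a) - arg (1 - a)) = (1 - ‖a‖ ^ 2) / ‖1 - a ^ 2‖ := by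
  rw [cos_arg_sub_arg (one_add_ne_zero_of_norm_lt_one ha) (one_sub_ne_zero_of_norm_lt_one ha),
    re_one_add_mul_conj_one_sub, ← norm_mul, ← sq_sub_sq, one_pow]

end Complex

/-- Weierstrass–Enneper parametrization of Scherk's surface: for `|ζ| < 1/2`,
with `x = 2 Re (arctan ζ)` and `y = -Im (log ((1+ζ)/(1-ζ)))`
(where `arctan ζ = (i/2)(log(1 - iζ) - log(1 + iζ))` and `log` is principal),
one has `Re (log ((1+ζ²)/(1-ζ²))) = log (cos y / cos x)`. -/
theorem scherk_weierstrass_enneper (ζ : ℂ) (hζ : ‖ζ‖ < 1 / 2)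
    (x y : ℝ)
    (hx : x = 2 * ((Complex.I / 2) *
      (Complex.log (1 - Complex.I * ζ) - Complex.log (1 + Complex.I * ζ))).re)
    (hy : y = -(Complex.log ((1 + ζ) / (1 - ζ))).im) :
    (Complex.log ((1 + ζ ^ 2) / (1 - ζ ^ 2))).re = Real.log (Real.cos y / Real.cos x) := by
  have hζ1 : ‖ζ‖ < 1 := by linarith
  have hIζ : ‖I * ζ‖ = ‖ζ‖ := by simp
  have hx' : x = arg (1 + I * ζ) - arg (1 - I * ζ) := by
    simp [hx, mul_re, log_im]
  have hcos_x : Real.cos x = (1 - ‖ζ‖ ^ 2) / ‖1 + ζ ^ 2‖ := by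
    rw [hx', cos_arg_one_add_sub_arg_one_sub (hIζ.trans_lt hζ1), hIζ, mul_pow, I_sq, neg_one_mul,
      sub_neg_eq_add]
  have hcos_y : Real.cos y = (1 - ‖ζ‖ ^ 2) / ‖1 - ζ ^ 2‖ := by
    rw [hy, Real.cos_neg, log_im, cos_arg_div (one_add_ne_zero_of_norm_lt_one hζ1)
      (one_sub_ne_zero_of_norm_lt_one hζ1), cos_arg_one_add_sub_arg_one_sub hζ1]
  have hζsq : ‖ζ ^ 2‖ < 1 := by rw [norm_pow]; nlinarith [norm_nonneg ζ]
  have h_one_sub_sq : (1 : ℝ) - ‖ζ‖ ^ 2 ≠ 0 := by nlinarith [norm_nonneg ζ]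
  rw [hcos_x, hcos_y, div_div_div_cancel_left' _ _ h_one_sub_sq, log_re, norm_div,
    Real.log_div (norm_ne_zero_iff.2 (one_add_ne_zero_of_norm_lt_one hζsq))
      (norm_ne_zero_iff.2 (one_sub_ne_zero_of_norm_lt_one hζsq))]
end

section
/- Let X be a real number and let A be a real number with 0 < A < π. Then arctan(tanh(X)·cot(A)) = arctan(X/A) + ∑_{k=1}^∞ ( arctan(X/(kπ + A)) − arctan(X/(kπ − A)) ), where the series converges. -/
/-!
Put `z = A + iX`. Then `sin z = sin A cosh X + i cos A sinh X` has positive real part, so its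
argument is `arctan (tanh X cot A)`. In Euler's product `sin z = z ∏ₖ (1 - z²/(kπ)²)` the `k`-th
factor is a positive multiple of `(kπ + z)(kπ - z)`, whose argument is
`arctan (X/(kπ + A)) - arctan (X/(kπ - A))`, while `arg z = arctan (X/A)`; hence the identity holds
modulo `2π`. Both sides are continuous in `X` (the `k`-th term is `O(|X|/k²)` locally uniformly)
and agree at `X = 0`, so, `ℝ → ℝ/2πℤ` being a covering map, they agree everywhere.
-/

open Real Filter Topology Finset

namespace Complex

theorem arg_eq_arctan_of_re_pos {z : ℂ} (hz : 0 < z.re) : arg z = Real.arctan (z.im / z.re) := by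
  have h := abs_lt.mp (abs_arg_lt_pi_div_two_iff.mpr (Or.inl hz))
  rw [← tan_arg, Real.arctan_tan h.1 h.2]

theorem arg_prod_coe_angle {ι : Type*} {s : Finset ι} {f : ι → ℂ} (hf : ∀ i ∈ s, f i ≠ 0) :
    (arg (∏ i ∈ s, f i) : Real.Angle) = ∑ i ∈ s, (arg (f i) : Real.Angle) := by
  classical
  induction s using Finset.induction_on with
  | empty => simp
  | insert i s hi ih =>
    have hs : ∀ j ∈ s, f j ≠ 0 := fun j hj => hf j (mem_insert_of_mem hj)
    rw [prod_insert hi, sum_insert hi, arg_mul_coe_angle (hf i (mem_insert_self i s))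
      (prod_ne_zero_iff.mpr hs), ih hs]

end Complex

namespace Real

theorem lipschitzWith_arctan : LipschitzWith 1 arctan :=
  lipschitzWith_of_nnnorm_deriv_le differentiable_arctan fun x => by
    rw [← NNReal.coe_le_coe, coe_nnnorm, deriv_arctan, norm_of_nonneg (by positivity)]
    exact div_le_one_of_le₀ (by nlinarith) (by positivity)

theorem abs_arctan_sub_arctan_le (x y : ℝ) : |arctan x - arctan y| ≤ |x - y| := by
  simpa [Real.dist_eq] using lipschitzWith_arctan.dist_le_mul x y

@[fun_prop]
theorem continuous_tanh : Continuous tanh := by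
  simp_rw [funext tanh_eq_sinh_div_cosh]
  exact continuous_sinh.div continuous_cosh fun x => (cosh_pos x).ne'

theorem Angle.isCoveringMap_coe : IsCoveringMap ((↑) : ℝ → Angle) :=
  AddCircle.isCoveringMap_coe (2 * π)

end Real

/-- The index `k : ℕ` stands for the paper's `k + 1`. -/
noncomputable def ramanujanTerm (A X : ℝ) (k : ℕ) : ℝ :=
  arctan (X / ((k + 1) * π + A)) - arctan (X / ((k + 1) * π - A))

section RamanujanTerm

variable {A : ℝ}

theorem lt_natCast_add_one_mul_pi (hA₁ : A < π) (k : ℕ) : A < (k + 1) * π := by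
  nlinarith [pi_pos, (Nat.cast_nonneg k : (0 : ℝ) ≤ k)]

theorem summable_one_div_natCast_add_one_sq : Summable fun k : ℕ => 1 / ((k : ℝ) + 1) ^ 2 := by
  simpa using (summable_nat_add_iff 1).mpr (summable_one_div_nat_pow.mpr one_lt_two)

theorem abs_ramanujanTerm_le (hA₀ : 0 < A) (hA₁ : A < π) (X : ℝ) (k : ℕ) :
    |ramanujanTerm A X k| ≤ 2 * A * |X| / (π ^ 2 - A ^ 2) * (1 / ((k : ℝ) + 1) ^ 2) := by
  set c : ℝ := (k + 1) * π
  have hc : A < c := lt_natCast_add_one_mul_pi hA₁ k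
  have hk : 1 ≤ ((k : ℝ) + 1) ^ 2 := by nlinarith [(Nat.cast_nonneg k : (0 : ℝ) ≤ k)]
  have hπA : 0 < π ^ 2 - A ^ 2 := by nlinarith
  calc |ramanujanTerm A X k| ≤ |X / (c + A) - X / (c - A)| := abs_arctan_sub_arctan_le _ _
    _ = 2 * A * |X| / (c ^ 2 - A ^ 2) := by
      have hden : 0 < c ^ 2 - A ^ 2 := by nlinarith
      rw [show X / (c + A) - X / (c - A) = -(2 * A * X) / (c ^ 2 - A ^ 2) by
          field_simp [show c - A ≠ 0 by linarith, show c + A ≠ 0 by linarith]; ring,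
        abs_div, abs_neg, abs_mul, abs_of_pos (by linarith : 0 < 2 * A), abs_of_pos hden]
    _ ≤ 2 * A * |X| / ((π ^ 2 - A ^ 2) * ((k : ℝ) + 1) ^ 2) := by
      gcongr
      nlinarith
    _ = _ := by field_simp

theorem summable_ramanujanTerm (hA₀ : 0 < A) (hA₁ : A < π) (X : ℝ) :
    Summable (ramanujanTerm A X) :=
  Summable.of_norm_bounded (summable_one_div_natCast_add_one_sq.mul_left _)
    (abs_ramanujanTerm_le hA₀ hA₁ X)

theorem continuous_tsum_ramanujanTerm (hA₀ : 0 < A) (hA₁ : A < π) :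
    Continuous fun X => ∑' k, ramanujanTerm A X k := by
  refine continuous_iff_continuousAt.mpr fun x => ?_
  set R := |x| + 1
  have hR : ContinuousOn (fun X => ∑' k, ramanujanTerm A X k) (Set.Icc (-R) R) := by
    refine continuousOn_tsum (fun k => by unfold ramanujanTerm; fun_prop)
      (summable_one_div_natCast_add_one_sq.mul_left (2 * A * R / (π ^ 2 - A ^ 2))) fun k X hX => ?_
    refine (abs_ramanujanTerm_le hA₀ hA₁ X k).trans ?_
    have hπA : 0 < π ^ 2 - A ^ 2 := by nlinarith
    gcongr
    exact abs_le.mpr hX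
  exact hR.continuousAt (Icc_mem_nhds (by linarith [neg_abs_le x]) (by linarith [le_abs_self x]))

end RamanujanTerm

section EulerProduct

open Complex

variable {A : ℝ}

theorem sin_ofReal_add_ofReal_mul_I (x y : ℝ) :
    sin (x + y * I) = (Real.sin x * Real.cosh y : ℝ) + (Real.cos x * Real.sinh y : ℝ) * I := by
  rw [sin_add_mul_I]
  push_cast
  rfl

theorem re_sin_ofReal_add_ofReal_mul_I_pos (hA₀ : 0 < A) (hA₁ : A < π) (X : ℝ) :
    0 < (sin (A + X * I)).re := by
  simpa [sin_ofReal_add_ofReal_mul_I, sin_ofReal_re] using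
    mul_pos (sin_pos_of_pos_of_lt_pi hA₀ hA₁) (cosh_pos X)

theorem arg_sin_ofReal_add_ofReal_mul_I (hA₀ : 0 < A) (hA₁ : A < π) (X : ℝ) :
    arg (sin (A + X * I)) = Real.arctan (Real.tanh X * Real.cot A) := by
  rw [arg_eq_arctan_of_re_pos (re_sin_ofReal_add_ofReal_mul_I_pos hA₀ hA₁ X),
    Real.tanh_eq_sinh_div_cosh, Real.cot_eq_cos_div_sin]
  simp only [sin_ofReal_add_ofReal_mul_I, add_re, ofReal_re, mul_re, I_re, mul_zero, ofReal_im,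
    I_im, mul_one, sub_self, add_zero, add_im, mul_im, zero_add]
  field_simp [(cosh_pos X).ne']

theorem euler_sin_factor_eq (z : ℂ) (k : ℕ) :
    1 - (z / π) ^ 2 / ((k : ℂ) + 1) ^ 2
      = (((k + 1) * π : ℝ) + z) * (((k + 1) * π : ℝ) - z) * ((((k + 1) * π) ^ 2)⁻¹ : ℝ) := by
  have hπ : (π : ℂ) ≠ 0 := ofReal_ne_zero.mpr pi_ne_zero
  have hk : (k : ℂ) + 1 ≠ 0 := by exact_mod_cast k.succ_ne_zero
  push_cast
  field_simp
  ring

theorem euler_sin_factor_ne_zero_and_coe_arg_eq (hA₀ : 0 < A) (hA₁ : A < π) (X : ℝ) (k : ℕ) :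
    1 - ((A + X * I) / π) ^ 2 / ((k : ℂ) + 1) ^ 2 ≠ 0 ∧
    (arg (1 - ((A + X * I) / π) ^ 2 / ((k : ℂ) + 1) ^ 2) : Real.Angle) = ramanujanTerm A X k := by
  set c : ℝ := (k + 1) * π
  have hc : A < c := lt_natCast_add_one_mul_pi hA₁ k
  have hplus : 0 < ((c : ℂ) + (A + X * I)).re := by simp; linarith
  have hminus : 0 < ((c : ℂ) - (A + X * I)).re := by simp; linarith
  have hplus₀ : (c : ℂ) + (A + X * I) ≠ 0 := fun h => by simp [h] at hplus
  have hminus₀ : (c : ℂ) - (A + X * I) ≠ 0 := fun h => by simp [h] at hminus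
  have hc₀ : (0 : ℝ) < (c ^ 2)⁻¹ := inv_pos.mpr (pow_pos (by linarith) 2)
  rw [euler_sin_factor_eq]
  refine ⟨mul_ne_zero (mul_ne_zero hplus₀ hminus₀) (ofReal_ne_zero.mpr hc₀.ne'), ?_⟩
  rw [arg_mul_real hc₀, arg_mul_coe_angle hplus₀ hminus₀, arg_eq_arctan_of_re_pos hplus,
    arg_eq_arctan_of_re_pos hminus, ramanujanTerm, Real.Angle.coe_sub]
  simp [c, neg_div, arctan_neg, sub_eq_add_neg]

theorem coe_arg_euler_partial_prod (hA₀ : 0 < A) (hA₁ : A < π) (X : ℝ) (n : ℕ) :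
    (arg ((A + X * I) *
        ∏ j ∈ range n, (1 - ((A + X * I) / π) ^ 2 / ((j : ℂ) + 1) ^ 2)) : Real.Angle)
      = (Real.arctan (X / A) + ∑ k ∈ range n, ramanujanTerm A X k : ℝ) := by
  have hz : 0 < (A + X * I : ℂ).re := by simpa using hA₀
  have hfactor := euler_sin_factor_ne_zero_and_coe_arg_eq hA₀ hA₁ X
  rw [arg_mul_coe_angle (fun h => by simp [h] at hz)
      (prod_ne_zero_iff.mpr fun k _ => (hfactor k).1),
    arg_prod_coe_angle fun k _ => (hfactor k).1, sum_congr rfl fun k _ => (hfactor k).2,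
    arg_eq_arctan_of_re_pos hz, Real.Angle.coe_add, ← Real.Angle.coe_coeHom, map_sum]
  simp

theorem coe_arctan_tanh_mul_cot (hA₀ : 0 < A) (hA₁ : A < π) (X : ℝ) :
    (Real.arctan (Real.tanh X * Real.cot A) : Real.Angle)
      = (Real.arctan (X / A) + ∑' k, ramanujanTerm A X k : ℝ) := by
  have hprod := tendsto_euler_sin_prod ((A + X * I) / π)
  rw [mul_div_cancel₀ _ (ofReal_ne_zero.mpr pi_ne_zero)] at hprod
  have hslit := mem_slitPlane_iff.mpr (Or.inl (re_sin_ofReal_add_ofReal_mul_I_pos hA₀ hA₁ X))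
  have hargs := (Real.Angle.continuous_coe.tendsto _).comp
    ((continuousAt_arg hslit).tendsto.comp hprod)
  have hsums := (Real.Angle.continuous_coe.tendsto _).comp
    ((tendsto_const_nhds (x := Real.arctan (X / A))).add
      (summable_ramanujanTerm hA₀ hA₁ X).hasSum.tendsto_sum_nat)
  rw [← arg_sin_ofReal_add_ofReal_mul_I hA₀ hA₁ X]
  exact tendsto_nhds_unique hargs
    (hsums.congr fun n => (coe_arg_euler_partial_prod hA₀ hA₁ X n).symm)

end EulerProduct

/-- Entry 11 of Ramanujan (corrected form): for real `X` and `0 < A < π`,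
`arctan (tanh X · cot A) = arctan (X/A) + ∑_{k=1}^∞ (arctan (X/(kπ + A)) - arctan (X/(kπ - A)))`,
where the series converges.  The index `k : ℕ` corresponds to the original
index `k + 1`, and the sum of the series is expressed as the difference of the
two sides. -/
theorem ramanujan_entry_eleven (X A : ℝ) (hA₀ : 0 < A) (hA₁ : A < Real.pi) :
    HasSum
      (fun k : ℕ =>
        Real.arctan (X / (((k : ℝ) + 1) * Real.pi + A)) -
          Real.arctan (X / (((k : ℝ) + 1) * Real.pi - A)))
      (Real.arctan (Real.tanh X * Real.cot A) - Real.arctan (X / A)) := by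
  have hlift : (fun Y => arctan (tanh Y * cot A))
      = fun Y => arctan (Y / A) + ∑' k, ramanujanTerm A Y k :=
    Angle.isCoveringMap_coe.eq_of_comp_eq (by fun_prop)
      (by have := continuous_tsum_ramanujanTerm hA₀ hA₁; fun_prop)
      (funext (coe_arctan_tanh_mul_cot hA₀ hA₁)) 0 (by simp [ramanujanTerm])
  rw [congrFun hlift X, add_sub_cancel_left]
  exact (summable_ramanujanTerm hA₀ hA₁ X).hasSum
end

section
/- Let s be a complex number with Re(s) < 0 and let c be a positive real number. Then ∫_0^∞ t^{−s−1} e^{−ct} sin(t) dt = Γ(−s) · ( (c − i)^s − (c + i)^s ) / (2i), where the complex powers are principal (both c − i and c + i have positive real part) and Γ is the complex Gamma function; the integral converges absolutely. -/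
/-!
Since `sin t = (e^{it} - e^{-it}) / (2i)`, the integral is the difference of the Laplace
transforms of `t^{-s-1}` at `c - i` and `c + i`, divided by `2i`. The Gamma integral
`∫₀^∞ t^{a-1} e^{-zt} dt = Γ(a) z^{-a}` is classical for real `z > 0`; both sides are
holomorphic on the right half-plane (the left one by differentiation under the integral sign),
so it holds for `Re z > 0` by the identity theorem.
-/

open MeasureTheory Set Complex Filter Metric Topology

lemma norm_cpow_mul_cexp_neg_mul {t : ℝ} (ht : 0 < t) (b z : ℂ) :
    ‖(t : ℂ) ^ b * cexp (-z * t)‖ = t ^ b.re * Real.exp (-z.re * t) := by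
  rw [norm_mul, norm_cpow_eq_rpow_re_of_pos ht, Complex.norm_exp]
  simp

lemma continuousOn_cpow_mul_cexp_neg_mul (b z : ℂ) :
    ContinuousOn (fun t : ℝ => (t : ℂ) ^ b * cexp (-z * t)) (Ioi 0) :=
  ContinuousOn.mul
    (fun t ht => (continuousAt_ofReal_cpow_const _ _ (Or.inr ht.ne')).continuousWithinAt)
    (by fun_prop)

lemma integrableOn_cpow_mul_cexp_neg_mul {a z : ℂ} (ha : 0 < a.re) (hz : 0 < z.re) :
    IntegrableOn (fun t : ℝ => (t : ℂ) ^ (a - 1) * cexp (-z * t)) (Ioi 0) := by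
  have hreal : IntegrableOn (fun t : ℝ => t ^ (a.re - 1) * Real.exp (-z.re * t)) (Ioi 0) := by
    simpa using integrableOn_rpow_mul_exp_neg_mul_rpow (by linarith) zero_lt_one hz
  refine hreal.mono'
    ((continuousOn_cpow_mul_cexp_neg_mul _ z).aestronglyMeasurable measurableSet_Ioi) ?_
  filter_upwards [self_mem_ae_restrict measurableSet_Ioi] with t ht
  rw [norm_cpow_mul_cexp_neg_mul ht, sub_re, one_re]

lemma hasDerivAt_integral_cpow_mul_cexp_neg_mul {a z₀ : ℂ} (ha : 0 < a.re)
    (hz₀ : 0 < z₀.re) :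
    HasDerivAt (fun z : ℂ => ∫ t in Ioi (0 : ℝ), (t : ℂ) ^ (a - 1) * cexp (-z * t))
      (∫ t in Ioi (0 : ℝ), -((t : ℂ) ^ a * cexp (-z₀ * t))) z₀ := by
  set ε := z₀.re / 2 with hε_def
  have hε : 0 < ε := by positivity
  have hbound : ∀ᵐ (t : ℝ) ∂(volume.restrict (Ioi 0)), ∀ z ∈ ball z₀ ε,
      ‖-((t : ℂ) ^ a * cexp (-z * t))‖ ≤ ‖(t : ℂ) ^ a * cexp (-(ε : ℂ) * t)‖ := by
    filter_upwards [self_mem_ae_restrict measurableSet_Ioi] with t (ht : 0 < t) z hz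
    rw [norm_neg, norm_cpow_mul_cexp_neg_mul ht, norm_cpow_mul_cexp_neg_mul ht, ofReal_re]
    have hre : ε ≤ z.re := by
      have hdist := (abs_re_le_norm (z - z₀)).trans (mem_ball_iff_norm.mp hz).le
      rw [sub_re] at hdist
      linarith [neg_abs_le (z.re - z₀.re), hε_def]
    gcongr
  have hbound_int : Integrable (fun t : ℝ => ‖(t : ℂ) ^ a * cexp (-(ε : ℂ) * t)‖)
      (volume.restrict (Ioi 0)) := by
    simpa using (integrableOn_cpow_mul_cexp_neg_mul (a := a + 1)
      (by rw [add_re, one_re]; linarith)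
      (by simpa using hε)).norm
  have hderiv : ∀ᵐ (t : ℝ) ∂(volume.restrict (Ioi 0)), ∀ z ∈ ball z₀ ε,
      HasDerivAt (fun z : ℂ => (t : ℂ) ^ (a - 1) * cexp (-z * t))
        (-((t : ℂ) ^ a * cexp (-z * t))) z := by
    filter_upwards [self_mem_ae_restrict measurableSet_Ioi] with t (ht : 0 < t) z _
    have ht' : (t : ℂ) ≠ 0 := ofReal_ne_zero.mpr ht.ne'
    refine ((((hasDerivAt_id z).neg.mul_const (t : ℂ)).cexp).const_mul _).congr_deriv ?_
    rw [cpow_sub _ _ ht', cpow_one]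
    simp only [Pi.neg_apply, id]
    field_simp
  exact (hasDerivAt_integral_of_dominated_loc_of_deriv_le (ball_mem_nhds z₀ hε)
    (.of_forall fun z =>
      (continuousOn_cpow_mul_cexp_neg_mul _ z).aestronglyMeasurable measurableSet_Ioi)
    (integrableOn_cpow_mul_cexp_neg_mul ha hz₀)
    ((continuousOn_cpow_mul_cexp_neg_mul a z₀).neg.aestronglyMeasurable measurableSet_Ioi :)
    hbound hbound_int hderiv).2

lemma eqOn_re_pos_of_forall_ofReal_eq {f g : ℂ → ℂ} (hf : AnalyticOnNhd ℂ f {z | 0 < z.re})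
    (hg : AnalyticOnNhd ℂ g {z | 0 < z.re}) (hfg : ∀ r : ℝ, 0 < r → f r = g r) :
    EqOn f g {z | 0 < z.re} := by
  have hreal : Tendsto ((↑) : ℝ → ℂ) (𝓝[≠] 1) (𝓝[≠] 1) :=
    continuous_ofReal.continuousWithinAt.tendsto_nhdsWithin fun _ hr => ofReal_ne_one.mpr hr
  refine hf.eqOn_of_preconnected_of_frequently_eq hg
    (convex_halfSpace_re_gt 0).isPreconnected (by simp) (hreal.frequently ?_)
  exact ((eventually_gt_nhds one_pos).filter_mono nhdsWithin_le_nhds).mono hfg |>.frequently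

lemma integral_cpow_mul_exp_neg_mul_Ioi_of_re_pos {a z : ℂ} (ha : 0 < a.re) (hz : 0 < z.re) :
    ∫ t in Ioi (0 : ℝ), (t : ℂ) ^ (a - 1) * cexp (-z * t) = Gamma a * z ^ (-a) := by
  have hopen : IsOpen {z : ℂ | 0 < z.re} := isOpen_lt continuous_const continuous_re
  refine eqOn_re_pos_of_forall_ofReal_eq
    (f := fun z => ∫ t in Ioi (0 : ℝ), (t : ℂ) ^ (a - 1) * cexp (-z * t))
    (g := fun z => Gamma a * z ^ (-a)) ?_ ?_ (fun r hr => ?_) hz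
  · refine DifferentiableOn.analyticOnNhd (fun z hz => ?_) hopen
    exact (hasDerivAt_integral_cpow_mul_cexp_neg_mul ha hz).differentiableAt.differentiableWithinAt
  · refine DifferentiableOn.analyticOnNhd (fun z hz => ?_) hopen
    exact ((differentiableAt_id.cpow_const (Or.inl hz)).const_mul _).differentiableWithinAt
  · have harg : arg r ≠ Real.pi := by
      rw [arg_ofReal_of_nonneg hr.le]
      exact Real.pi_ne_zero.symm
    simp only [neg_mul, integral_cpow_mul_exp_neg_mul_Ioi ha hr]
    rw [one_div, inv_cpow _ _ harg, ← cpow_neg, mul_comm]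

lemma cexp_neg_mul_mul_sin (c t : ℂ) :
    cexp (-c * t) * Complex.sin t = (cexp (-(c - I) * t) - cexp (-(c + I) * t)) / (2 * I) := by
  rw [Complex.sin, eq_div_iff (mul_ne_zero two_ne_zero I_ne_zero),
    show -(c - I) * t = -c * t + t * I by ring, show -(c + I) * t = -c * t + -t * I by ring,
    Complex.exp_add, Complex.exp_add]
  ring_nf
  rw [I_sq]
  ring

/-- Evaluation of the integral `I₅ₖ`: for complex `s` with `Re s < 0` and a
positive real `c`,
`∫_0^∞ t^{-s-1} e^{-ct} sin t dt = Γ(-s) ((c - i)ˢ - (c + i)ˢ)/(2i)`,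
where the complex powers are principal and `Γ` is the complex Gamma function;
the integral converges absolutely. -/
theorem integral_exp_sin_cpow (s : ℂ) (hs : s.re < 0) (c : ℝ) (hc : 0 < c) :
    (∫ t in Set.Ioi (0 : ℝ),
        (t : ℂ) ^ (-s - 1) * Complex.exp (-(c : ℂ) * t) * Complex.sin t) =
        Complex.Gamma (-s) *
          (((c : ℂ) - Complex.I) ^ s - ((c : ℂ) + Complex.I) ^ s) / (2 * Complex.I) ∧
      IntegrableOn
        (fun t : ℝ => (t : ℂ) ^ (-s - 1) * Complex.exp (-(c : ℂ) * t) * Complex.sin t)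
        (Set.Ioi 0) := by
  have ha : 0 < (-s).re := by rw [neg_re]; linarith
  have hminus : 0 < ((c : ℂ) - I).re := by simpa using hc
  have hplus : 0 < ((c : ℂ) + I).re := by simpa using hc
  have hsplit : (fun t : ℝ => (t : ℂ) ^ (-s - 1) * cexp (-(c : ℂ) * t) * Complex.sin t) =
      fun t : ℝ => ((t : ℂ) ^ (-s - 1) * cexp (-((c : ℂ) - I) * t)
        - (t : ℂ) ^ (-s - 1) * cexp (-((c : ℂ) + I) * t)) / (2 * I) := by
    ext t
    rw [mul_assoc, cexp_neg_mul_mul_sin, mul_div_assoc', mul_sub]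
  have hminus_int := integrableOn_cpow_mul_cexp_neg_mul ha hminus
  have hplus_int := integrableOn_cpow_mul_cexp_neg_mul ha hplus
  rw [hsplit]
  refine ⟨?_, (hminus_int.sub hplus_int).div_const _⟩
  rw [integral_div, integral_sub hminus_int hplus_int,
    integral_cpow_mul_exp_neg_mul_Ioi_of_re_pos ha hminus,
    integral_cpow_mul_exp_neg_mul_Ioi_of_re_pos ha hplus, neg_neg, mul_sub]
end
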